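/- Let g be an integrable function on ℝ with ∫ g dx > 0, and let α > 0. Then for every s > 0 there exists f ∈ H¹(ℝ) with ‖f‖²_{L²} = s and ∫ ((f')² − α f² g) dx < 0. -/

import Mathlib

/-!
Take the Gaussian profile `ψ x = exp (-x ^ 2)` and dilate it to `ψ (θ x)`. The kinetic term
of the dilation is `|θ| ∫ (ψ')²`, while by dominated convergence the potential term
`α ∫ ψ (θ x)² g x` tends to `α ψ(0)² ∫ g > 0` as `θ → 0`. So the energy is negative for small
`θ ≠ 0`, and multiplying by a constant `c` fixes the mass `∫ f²` at `s` while scaling the energy by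
`c² > 0`.
-/

open MeasureTheory

noncomputable section

def H1R (g : ℝ → ℝ) : Prop :=
  Differentiable ℝ g ∧ MemLp g 2 ∧ MemLp (deriv g) 2

open Real Filter Topology

def energyDensity (α : ℝ) (g f : ℝ → ℝ) (x : ℝ) : ℝ :=
  deriv f x ^ 2 - α * f x ^ 2 * g x

theorem MeasureTheory.MemLp.two_comp_mul_left {u : ℝ → ℝ} (hu : MemLp u 2) {θ : ℝ} (hθ : θ ≠ 0) :
    MemLp (fun x => u (θ * x)) 2 :=
  (memLp_two_iff_integrable_sq
    (hu.1.comp_quasiMeasurePreserving (Measure.quasiMeasurePreserving_smul volume hθ))).2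
    (((memLp_two_iff_integrable_sq hu.1).1 hu).comp_mul_left' hθ)

theorem integrable_sq_mul_of_norm_le {C : ℝ} {f g : ℝ → ℝ} (hf : Continuous f)
    (hfC : ∀ x, ‖f x‖ ≤ C) (hg : Integrable g) : Integrable fun x => f x ^ 2 * g x := by
  refine hg.bdd_mul (c := C ^ 2) (by fun_prop) (.of_forall fun x => ?_)
  rw [norm_pow]
  gcongr
  exact hfC x

theorem tendsto_integral_comp_mul_left_mul {μ : Measure ℝ} {φ g : ℝ → ℝ} {C : ℝ}
    (hφ : Continuous φ) (hφC : ∀ x, ‖φ x‖ ≤ C) (hg : Integrable g μ) :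
    Tendsto (fun θ => ∫ x, φ (θ * x) * g x ∂μ) (𝓝 0) (𝓝 (φ 0 * ∫ x, g x ∂μ)) := by
  rw [← integral_const_mul]
  refine tendsto_integral_filter_of_dominated_convergence (fun x => C * ‖g x‖)
    (.of_forall fun θ => by fun_prop) (.of_forall fun θ => .of_forall fun x => ?_)
    (hg.norm.const_mul C) (.of_forall fun x => ?_)
  · rw [norm_mul]
    exact mul_le_mul_of_nonneg_right (hφC _) (norm_nonneg _)
  · refine Tendsto.mul_const _ ?_
    exact (hφ.comp (continuous_mul_const x)).tendsto' 0 (φ 0) (by simp)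

section H1R

variable {f : ℝ → ℝ}

theorem H1R.const_mul (hf : H1R f) (c : ℝ) : H1R (fun x => c * f x) := by
  refine ⟨hf.1.const_mul c, hf.2.1.const_mul c, ?_⟩
  rw [deriv_const_mul_field']
  exact hf.2.2.const_mul c

theorem H1R.comp_mul_left (hf : H1R f) {θ : ℝ} (hθ : θ ≠ 0) : H1R (fun x => f (θ * x)) := by
  refine ⟨hf.1.comp (differentiable_id.const_mul θ), hf.2.1.two_comp_mul_left hθ, ?_⟩
  rw [show deriv (fun x => f (θ * x)) = fun x => θ * deriv f (θ * x) from
    funext (deriv_comp_mul_left θ f)]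
  exact (hf.2.2.two_comp_mul_left hθ).const_mul θ

theorem H1R.integrable_deriv_sq (hf : H1R f) : Integrable fun x => deriv f x ^ 2 :=
  (memLp_two_iff_integrable_sq hf.2.2.1).1 hf.2.2

end H1R

theorem integral_deriv_comp_mul_left_sq (f : ℝ → ℝ) (θ : ℝ) :
    ∫ x, deriv (fun x => f (θ * x)) x ^ 2 = |θ| * ∫ x, deriv f x ^ 2 := by
  simp_rw [deriv_comp_mul_left, smul_eq_mul, mul_pow]
  rw [integral_const_mul, Measure.integral_comp_mul_left (fun y => deriv f y ^ 2), smul_eq_mul,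
    ← sq_abs θ, abs_inv]
  rcases eq_or_ne θ 0 with rfl | hθ
  · simp
  · field_simp

theorem energyDensity_const_mul (α : ℝ) (g f : ℝ → ℝ) (c : ℝ) :
    energyDensity α g (fun x => c * f x) = fun x => c ^ 2 * energyDensity α g f x := by
  ext x
  simp only [energyDensity, deriv_const_mul_field']
  ring

section Energy

variable {α C : ℝ} {f g : ℝ → ℝ}

theorem integrable_energyDensity (hf : H1R f) (hfC : ∀ x, ‖f x‖ ≤ C) (hg : Integrable g) :
    Integrable (energyDensity α g f) := by
  refine (hf.integrable_deriv_sq.sub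
    ((integrable_sq_mul_of_norm_le hf.1.continuous hfC hg).const_mul α)).congr
    (.of_forall fun x => ?_)
  simp only [Pi.sub_apply, energyDensity, mul_assoc]

theorem integral_energyDensity (hf : H1R f) (hfC : ∀ x, ‖f x‖ ≤ C) (hg : Integrable g) :
    ∫ x, energyDensity α g f x = (∫ x, deriv f x ^ 2) - α * ∫ x, f x ^ 2 * g x := by
  simp only [energyDensity, mul_assoc]
  rw [integral_sub hf.integrable_deriv_sq
    ((integrable_sq_mul_of_norm_le hf.1.continuous hfC hg).const_mul α), integral_const_mul]

end Energy

theorem eventually_integral_energyDensity_comp_mul_left_neg {α C : ℝ} {ψ g : ℝ → ℝ}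
    (hψ : H1R ψ) (hψC : ∀ x, ‖ψ x‖ ≤ C) (hg : Integrable g) (hpos : 0 < α * ψ 0 ^ 2 * ∫ x, g x) :
    ∀ᶠ θ in 𝓝[≠] 0, ∫ x, energyDensity α g (fun x => ψ (θ * x)) x < 0 := by
  have hψ2C : ∀ x, ‖ψ x ^ 2‖ ≤ C ^ 2 := fun x => by
    rw [norm_pow]
    gcongr
    exact hψC x
  have hlim : Tendsto (fun θ => |θ| * (∫ x, deriv ψ x ^ 2) - α * ∫ x, ψ (θ * x) ^ 2 * g x)
      (𝓝 0) (𝓝 (|0| * (∫ x, deriv ψ x ^ 2) - α * (ψ 0 ^ 2 * ∫ x, g x))) :=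
    (continuous_abs.tendsto 0 |>.mul_const _).sub
      ((tendsto_integral_comp_mul_left_mul (hψ.1.continuous.pow 2) hψ2C hg).const_mul α)
  have hneg : |0| * (∫ x, deriv ψ x ^ 2) - α * (ψ 0 ^ 2 * ∫ x, g x) < 0 := by
    rw [abs_zero, zero_mul, zero_sub, ← mul_assoc]
    exact neg_neg_of_pos hpos
  filter_upwards [nhdsWithin_le_nhds (hlim.eventually (eventually_lt_nhds hneg)),
    self_mem_nhdsWithin] with θ hθneg hθ
  rwa [integral_energyDensity (hψ.comp_mul_left hθ) (fun x => hψC (θ * x)) hg,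
    integral_deriv_comp_mul_left_sq]

theorem exists_H1R_integral_sq_pos_energy_neg {α C : ℝ} {ψ g : ℝ → ℝ}
    (hψ : H1R ψ) (hψC : ∀ x, ‖ψ x‖ ≤ C) (hmass : 0 < ∫ x, ψ x ^ 2) (hg : Integrable g)
    (hpos : 0 < α * ψ 0 ^ 2 * ∫ x, g x) :
    ∃ f : ℝ → ℝ, H1R f ∧ 0 < ∫ x, f x ^ 2 ∧ Integrable (energyDensity α g f) ∧
      ∫ x, energyDensity α g f x < 0 := by
  obtain ⟨θ, hneg, hθ⟩ :=
    ((eventually_integral_energyDensity_comp_mul_left_neg hψ hψC hg hpos).and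
      self_mem_nhdsWithin).exists
  refine ⟨_, hψ.comp_mul_left hθ, ?_,
    integrable_energyDensity (hψ.comp_mul_left hθ) (fun x => hψC (θ * x)) hg, hneg⟩
  rw [Measure.integral_comp_mul_left (fun y => ψ y ^ 2), smul_eq_mul]
  exact mul_pos (abs_pos.2 (inv_ne_zero hθ)) hmass

theorem exists_H1R_integral_sq_eq_of_energy_neg {α : ℝ} {f g : ℝ → ℝ} (hf : H1R f)
    (hmass : 0 < ∫ x, f x ^ 2) (hint : Integrable (energyDensity α g f))
    (hneg : ∫ x, energyDensity α g f x < 0) {s : ℝ} (hs : 0 < s) :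
    ∃ f : ℝ → ℝ, H1R f ∧ ∫ x, f x ^ 2 = s ∧ Integrable (energyDensity α g f) ∧
      ∫ x, energyDensity α g f x < 0 := by
  set c := √(s / ∫ x, f x ^ 2)
  have hc : c ^ 2 = s / ∫ x, f x ^ 2 := sq_sqrt (by positivity)
  refine ⟨fun x => c * f x, hf.const_mul c, ?_, ?_, ?_⟩
  · simp_rw [mul_pow]
    rw [integral_const_mul, hc, div_mul_cancel₀ _ hmass.ne']
  · rw [energyDensity_const_mul]
    exact hint.const_mul _
  · rw [energyDensity_const_mul, integral_const_mul, hc]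
    exact mul_neg_of_pos_of_neg (by positivity) hneg

theorem hasDerivAt_exp_neg_sq (x : ℝ) :
    HasDerivAt (fun x => exp (-x ^ 2)) (-2 * x * exp (-x ^ 2)) x := by
  have := (((hasDerivAt_pow 2 x).neg).exp)
  simp only [Pi.neg_apply] at this
  convert this using 1
  push_cast
  ring

theorem exp_neg_sq_sq (x : ℝ) : exp (-x ^ 2) ^ 2 = exp (-2 * x ^ 2) := by
  rw [← exp_nat_mul]; ring_nf

theorem H1R_exp_neg_sq : H1R fun x => exp (-x ^ 2) := by
  have hderiv : deriv (fun x => exp (-x ^ 2)) = fun x => -2 * x * exp (-x ^ 2) :=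
    funext fun x => (hasDerivAt_exp_neg_sq x).deriv
  refine ⟨fun x => (hasDerivAt_exp_neg_sq x).differentiableAt,
    (memLp_two_iff_integrable_sq (by fun_prop)).2 ?_, ?_⟩
  · simpa only [exp_neg_sq_sq] using integrable_exp_neg_mul_sq two_pos
  · rw [hderiv]
    refine (memLp_two_iff_integrable_sq (by fun_prop)).2 ?_
    refine ((integrable_rpow_mul_exp_neg_mul_sq two_pos (by norm_num : (-1 : ℝ) < 2)).const_mul
      4).congr (.of_forall fun x => ?_)
    simp only [rpow_two, mul_pow, exp_neg_sq_sq]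
    ring

theorem integral_exp_neg_sq_sq : ∫ x, exp (-x ^ 2) ^ 2 = √(π / 2) := by
  simp_rw [exp_neg_sq_sq, integral_gaussian]

theorem exists_f_neg_quadratic_form (g : ℝ → ℝ) (hg : Integrable g)
    (hgpos : 0 < ∫ x : ℝ, g x) (α : ℝ) (hα : 0 < α) (s : ℝ) (hs : 0 < s) :
    ∃ f : ℝ → ℝ, H1R f ∧ (∫ x : ℝ, (f x) ^ 2) = s ∧
      Integrable (fun x => (deriv f x) ^ 2 - α * (f x) ^ 2 * g x) ∧
      (∫ x : ℝ, ((deriv f x) ^ 2 - α * (f x) ^ 2 * g x)) < 0 := by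
  have hbound : ∀ x : ℝ, ‖exp (-x ^ 2)‖ ≤ 1 := fun x => by
    rw [norm_of_nonneg (exp_nonneg _), exp_le_one_iff]
    exact neg_nonpos.2 (sq_nonneg x)
  have hmass : 0 < ∫ x, exp (-x ^ 2) ^ 2 := by
    rw [integral_exp_neg_sq_sq]
    positivity
  obtain ⟨f, hf, hfmass, hint, hneg⟩ := exists_H1R_integral_sq_pos_energy_neg H1R_exp_neg_sq
    hbound hmass hg (by simpa using mul_pos hα hgpos)
  exact exists_H1R_integral_sq_eq_of_energy_neg hf hfmass hint hneg hs
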